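/- (Bergman) A partially ordered set P has the property that every downward directed subset of P has a greatest lower bound in P if and only if every chain (totally ordered subset) of P has a greatest lower bound in P. -/

import Mathlib

/-!
If `S` is countable, directedness yields a decreasing sequence in `S` that is coinitial in it, and
the infimum of this chain is the infimum of `S`. If `S` is uncountable, well-order it in order
type `(#S).ord` and close each initial segment under a choice of binary lower bounds in `S`
(Iwamura's lemma): this writes `S` as the union of an increasing chain of directed subsets of
smaller cardinality. By induction on `#S` each of them has an infimum, these infima form a chain,
and the infimum of that chain is the infimum of `S`.
-/

open Set Cardinal

section BinaryClosure

variable {α : Type*} (f : α → α → α)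

def binaryClosureStep (B : Set α) : Set α := B ∪ image2 f B B

def binaryClosure (A : Set α) : Set α := ⋃ n : ℕ, (binaryClosureStep f)^[n] A

variable {f}

lemma monotone_iterate_binaryClosureStep (A : Set α) :
    Monotone fun n : ℕ => (binaryClosureStep f)^[n] A :=
  monotone_nat_of_le_succ fun n => by
    simp only [Function.iterate_succ_apply']
    exact subset_union_left

lemma subset_binaryClosure (A : Set α) : A ⊆ binaryClosure f A :=
  subset_iUnion (fun n : ℕ => (binaryClosureStep f)^[n] A) 0

lemma binaryClosure_mono {A B : Set α} (h : A ⊆ B) :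
    binaryClosure f A ⊆ binaryClosure f B := by
  refine iUnion_mono fun n => ?_
  induction n with
  | zero => exact h
  | succ n ih =>
    simp only [Function.iterate_succ_apply']
    exact union_subset_union ih (image2_subset ih ih)

lemma binaryClosure_subset {A S : Set α} (hS : ∀ p ∈ S, ∀ q ∈ S, f p q ∈ S)
    (h : A ⊆ S) : binaryClosure f A ⊆ S := by
  refine iUnion_subset fun n => ?_
  induction n with
  | zero => exact h
  | succ n ih =>
    rw [Function.iterate_succ_apply']
    exact union_subset ih (image2_subset_iff.2 fun p hp q hq => hS p (ih hp) q (ih hq))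

lemma map_mem_binaryClosure {A : Set α} {p q : α} (hp : p ∈ binaryClosure f A)
    (hq : q ∈ binaryClosure f A) : f p q ∈ binaryClosure f A := by
  obtain ⟨m, hm⟩ := mem_iUnion.1 hp
  obtain ⟨n, hn⟩ := mem_iUnion.1 hq
  have hmono := monotone_iterate_binaryClosureStep (f := f) A
  refine mem_iUnion.2 ⟨max m n + 1, ?_⟩
  rw [Function.iterate_succ_apply']
  exact Or.inr (mem_image2_of_mem (hmono (le_max_left m n) hm) (hmono (le_max_right m n) hn))

lemma mk_binaryClosure_le (A : Set α) : #(binaryClosure f A) ≤ max #A ℵ₀ := by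
  set m := max #A ℵ₀
  have hm : ℵ₀ ≤ m := le_max_right _ _
  have hiter : ∀ n : ℕ, #((binaryClosureStep f)^[n] A) ≤ m := by
    intro n
    induction n with
    | zero => exact le_max_left _ _
    | succ n ih =>
      rw [Function.iterate_succ_apply']
      calc _ ≤ m + m * m :=
            (mk_union_le _ _).trans (add_le_add ih (mk_image2_le.trans (mul_le_mul' ih ih)))
        _ = m := by rw [mul_eq_self hm, add_eq_self hm]
  have := mk_iUnion_le_lift fun n : ℕ => (binaryClosureStep f)^[n] A
  simp only [lift_uzero, mk_nat, lift_aleph0] at this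
  calc #(binaryClosure f A) ≤ ℵ₀ * m := this.trans (mul_le_mul' le_rfl (ciSup_le' hiter))
    _ ≤ m := mul_le_of_le hm hm le_rfl

end BinaryClosure

section ChainComplete

variable {P : Type*} [Preorder P]

lemma exists_isGLB_iUnion_of_monotone {ι : Type*} [LinearOrder ι] [Nonempty ι]
    (hP : ∀ C : Set P, C.Nonempty → IsChain (· ≤ ·) C → ∃ a, IsGLB C a)
    {D : ι → Set P} (hD : Monotone D) (h : ∀ i, ∃ a, IsGLB (D i) a) :
    ∃ a, IsGLB (⋃ i, D i) a := by
  choose a ha using h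
  have ha_anti : Antitone a := fun i j hij => (ha i).2 fun x hx => (ha j).1 (hD hij hx)
  obtain ⟨b, hb⟩ := hP _ (range_nonempty a) ha_anti.isChain_range
  exact ⟨b, (isGLB_iUnion_iff_of_isGLB ha b).1 hb⟩

lemma DirectedOn.exists_isGLB_of_countable
    (hP : ∀ C : Set P, C.Nonempty → IsChain (· ≤ ·) C → ∃ a, IsGLB C a)
    {S : Set P} (hS : S.Countable) (hne : S.Nonempty) (hdir : DirectedOn (· ≥ ·) S) :
    ∃ a, IsGLB S a := by
  have : Encodable S := hS.toEncodable
  have : Inhabited S := ⟨⟨_, hne.some_mem⟩⟩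
  have hdir' := hdir.directed_val
  set u := Subtype.val ∘ hdir'.sequence Subtype.val
  have hu_sub : range u ⊆ S := range_subset_iff.2 fun n => (hdir'.sequence _ n).2
  have hu_coinit : IsCoinitialFor S (range u) := fun s hs =>
    ⟨_, mem_range_self _, hdir'.sequence_le ⟨s, hs⟩⟩
  obtain ⟨a, ha⟩ := hP _ (range_nonempty u) hdir'.sequence_anti.isChain_range
  exact ⟨a, lowerBounds_mono_of_isCoinitialFor hu_coinit ha.1,
    fun b hb => ha.2 (lowerBounds_mono_set hu_sub hb)⟩

lemma DirectedOn.exists_isGLB_of_aleph0_lt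
    (hP : ∀ C : Set P, C.Nonempty → IsChain (· ≤ ·) C → ∃ a, IsGLB C a)
    {S : Set P} (hS : ℵ₀ < #S) (hdir : DirectedOn (· ≥ ·) S)
    (ih : ∀ D ⊆ S, #D < #S → D.Nonempty → DirectedOn (· ≥ ·) D → ∃ a, IsGLB D a) :
    ∃ a, IsGLB S a := by
  have hne : S.Nonempty := nonempty_iff_ne_empty.2 (by rintro rfl; simp at hS)
  have : Nonempty P := hne.to_subtype.map Subtype.val
  choose! f hfS hfl hfr using hdir
  obtain ⟨e⟩ : Nonempty ((#S).ord.ToType ≃ S) := Cardinal.eq.1 (mk_ord_toType _)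
  set D : (#S).ord.ToType → Set P := fun i => binaryClosure f (Subtype.val ∘ e '' Iic i)
  have hDS (i) : D i ⊆ S := binaryClosure_subset hfS (image_subset_iff.2 fun j _ => (e j).2)
  have hD_mono : Monotone D := fun i j hij =>
    binaryClosure_mono (image_mono (Iic_subset_Iic.2 hij))
  have hD_union : (⋃ i, D i) = S := by
    refine (iUnion_subset hDS).antisymm fun s hs => mem_iUnion.2 ⟨e.symm ⟨s, hs⟩, ?_⟩
    exact subset_binaryClosure _ ⟨e.symm ⟨s, hs⟩, self_mem_Iic, by simp⟩
  have hD_card (i) : #(D i) < #S := by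
    refine (mk_binaryClosure_le _).trans_lt (max_lt (mk_image_le.trans_lt ?_) hS)
    have hIio : #(Iio i) < #S := (mk_Iio_lt i (by simp)).trans_eq (mk_ord_toType _)
    rw [← Iio_insert]
    exact mk_insert_le.trans_lt (add_lt_of_lt hS.le hIio (one_lt_aleph0.trans hS))
  have hD_dir (i) : DirectedOn (· ≥ ·) (D i) := fun p hp q hq =>
    ⟨f p q, map_mem_binaryClosure hp hq, hfl p (hDS i hp) q (hDS i hq),
      hfr p (hDS i hp) q (hDS i hq)⟩
  have hD_glb (i) : ∃ a, IsGLB (D i) a :=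
    ih _ (hDS i) (hD_card i) ⟨_, subset_binaryClosure _ ⟨i, self_mem_Iic, rfl⟩⟩ (hD_dir i)
  have : Nonempty (#S).ord.ToType := ⟨e.symm ⟨_, hne.some_mem⟩⟩
  rw [← hD_union]
  exact exists_isGLB_iUnion_of_monotone hP hD_mono hD_glb

theorem DirectedOn.exists_isGLB
    (hP : ∀ C : Set P, C.Nonempty → IsChain (· ≤ ·) C → ∃ a, IsGLB C a)
    {S : Set P} (hne : S.Nonempty) (hdir : DirectedOn (· ≥ ·) S) : ∃ a, IsGLB S a := by
  induction hκ : #S using WellFoundedLT.induction generalizing S with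
  | ind κ ih =>
  subst hκ
  by_cases hS : S.Countable
  · exact DirectedOn.exists_isGLB_of_countable hP hS hne hdir
  refine DirectedOn.exists_isGLB_of_aleph0_lt hP (not_le.1 (mt le_aleph0_iff_set_countable.1 hS))
    hdir fun D _ hD hDne hDdir => ih _ hD hDne hDdir rfl

end ChainComplete

theorem stmt_7 {P : Type*} [PartialOrder P] :
    (∀ S : Set P, S.Nonempty →
      (∀ p ∈ S, ∀ q ∈ S, ∃ r ∈ S, r ≤ p ∧ r ≤ q) →
      ∃ a : P, IsGLB S a) ↔
    (∀ C : Set P, C.Nonempty → IsChain (· ≤ ·) C → ∃ a : P, IsGLB C a) :=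
  ⟨fun h C hne hC => h C hne (IsChain.directedOn (r := (· ≥ ·)) hC.symm),
    fun h _ hne hdir => DirectedOn.exists_isGLB h hne hdir⟩
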